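/- Let t ≥ 1 be an integer and let (A,B,C,D) be a random variable with A, B ∈ {0,1} and C, D ∈ {0,1}^{t−1}. Assume (i) A is independent from (B,D) and B is independent from (A,C), and (ii) (A,C) and (B,D) have the same marginal distribution, which is 2^{−5t}-close in total variation distance to U_{1/4}^t. Then Pr[A + |C| ≡ B + |D| (mod 2)] ≤ 1 − 2^{−3t}, where |C|, |D| denote Hamming weights. -/
import Mathlib


open Finset

def tow : ℕ → ℕ
  | 0 => 1
  | x + 1 => 2 ^ tow x

def hw {ι : Type*} [Fintype ι] (x : ι → Bool) : ℕ :=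
  (Finset.univ.filter fun i => x i = true).card

def IsLocal {κ ι : Type*} (d : ℕ) (f : (κ → Bool) → ι → Bool) : Prop :=
  ∀ i : ι, ∃ T : Finset κ, T.card ≤ d ∧
    ∀ x y : κ → Bool, (∀ j ∈ T, x j = y j) → f x i = f y i

def IsProductDist {κ : Type*} [Fintype κ] (p : (κ → Bool) → ℝ) : Prop :=
  ∃ γ : κ → ℝ, (∀ j, 0 ≤ γ j ∧ γ j ≤ 1) ∧
    ∀ x, p x = ∏ j, if x j then γ j else 1 - γ j

def IsDist {α : Type*} [Fintype α] (p : α → ℝ) : Prop :=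
  (∀ a, 0 ≤ p a) ∧ ∑ a, p a = 1

noncomputable def push {α β : Type*} [Fintype α] [DecidableEq β] (f : α → β) (p : α → ℝ) :
    β → ℝ :=
  fun b => ∑ a, if f a = b then p a else 0

noncomputable def tv {α : Type*} [Fintype α] (p q : α → ℝ) : ℝ :=
  (1 / 2) * ∑ a, |p a - q a|

noncomputable def biased {ι : Type*} [Fintype ι] (γ : ℝ) (x : ι → Bool) : ℝ :=
  ∏ i, if x i then γ else 1 - γ

noncomputable def unifParity (ι : Type*) [Fintype ι] [DecidableEq ι] (b : ℕ)
    (y : ι → Bool) : ℝ :=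
  if hw y % 2 = b then
    (1 : ℝ) / ((Finset.univ.filter fun z : ι → Bool => hw z % 2 = b).card : ℝ)
  else 0

noncomputable def dHard (n m : ℕ) (p : (Fin n → Bool) × (Fin m → Bool)) : ℝ :=
  biased (1 / 4) p.1 *
    (if hw p.1 % 2 = 1 then (1 / 2 : ℝ) ^ m
     else unifParity (Fin m) ((hw p.1 / 2) % 2) p.2)

def splitFun (n m : ℕ) (z : Fin (n + m) → Bool) : (Fin n → Bool) × (Fin m → Bool) :=
  (fun i => z (Fin.castAdd m i), fun j => z (Fin.natAdd n j))

noncomputable def dHard' (n m : ℕ) (z : Fin (n + m) → Bool) : ℝ :=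
  dHard n m (splitFun n m z)

def wOf {V : Type*} (Z : V → Bool) : Sym2 V → Bool :=
  Sym2.lift ⟨fun u v => xor (Z u) (Z v), fun u v => Bool.xor_comm _ _⟩

def ip {V : Type*} [Fintype V] (Z X : V → Bool) : ℕ :=
  (Finset.univ.filter fun v => Z v = true ∧ X v = true).card

noncomputable def dHost {V : Type*} [Fintype V] [DecidableEq V] (G : SimpleGraph V)
    [DecidableRel G.Adj] (z : (V ⊕ V ⊕ G.edgeSet) → Bool) : ℝ :=
  let X : V → Bool := fun v => z (Sum.inl v)
  let Y : V → Bool := fun v => z (Sum.inr (Sum.inl v))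
  let W : G.edgeSet → Bool := fun e => z (Sum.inr (Sum.inr e))
  biased (1 / 4) X *
    ∑ Z : V → Bool,
      (1 / 2 : ℝ) ^ (Fintype.card V) *
        (if ∀ e : G.edgeSet, W e = wOf Z e.1 then 1 else 0) *
        (if hw X % 2 = 1 then (1 / 2 : ℝ) ^ (Fintype.card V)
         else unifParity V ((ip Z X + hw X / 2) % 2) Y)

lemma push_mul_sum {α β : Type*} [Fintype α] [Fintype β] [DecidableEq β]
    (f : α → β) (p : α → ℝ) (g : β → ℝ) :
    ∑ b, push f p b * g b = ∑ a, p a * g (f a) := by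
  simp only [push, Finset.sum_mul, ite_mul, zero_mul]
  rw [Finset.sum_comm]
  refine Finset.sum_congr rfl fun a _ => ?_
  simp [Finset.sum_ite_eq]

lemma sum_mul_sub_le {α : Type*} [Fintype α] (p q g : α → ℝ) (hg : ∀ a, |g a| ≤ 1) :
    |∑ a, p a * g a - ∑ a, q a * g a| ≤ 2 * tv p q := by
  rw [← Finset.sum_sub_distrib, tv]
  calc |∑ a, (p a * g a - q a * g a)| ≤ ∑ a, |p a * g a - q a * g a| :=
        Finset.abs_sum_le_sum_abs _ _
    _ ≤ ∑ a, |p a - q a| := by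
        refine Finset.sum_le_sum fun a _ => ?_
        rw [← sub_mul, abs_mul]
        exact mul_le_of_le_one_right (abs_nonneg _) (hg a)
    _ = 2 * ((1/2) * ∑ a, |p a - q a|) := by ring

lemma sum_prod_bool {ι : Type*} [Fintype ι] [DecidableEq ι] (f : ι → Bool → ℝ) :
    ∑ x : ι → Bool, ∏ i, f i (x i) = ∏ i, (f i true + f i false) := by
  rw [← Fintype.prod_sum f]
  exact Finset.prod_congr rfl fun i _ => Fintype.sum_bool _

lemma neg_one_pow_hw {ι : Type*} [Fintype ι] (x : ι → Bool) :
    (-1:ℝ)^(hw x) = ∏ i, if x i then (-1:ℝ) else 1 := by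
  rw [hw, Finset.prod_ite, Finset.prod_const, Finset.prod_const, one_pow, mul_one]

lemma sum_biased {ι : Type*} [Fintype ι] [DecidableEq ι] (γ : ℝ) :
    ∑ x : ι → Bool, biased γ x = 1 := by
  have := sum_prod_bool (ι := ι) (fun _ b => if b then γ else 1 - γ)
  simp only [biased, if_true, if_false] at this ⊢
  rw [this]
  simp

lemma sum_biased_sign {ι : Type*} [Fintype ι] [DecidableEq ι] (γ : ℝ) :
    ∑ x : ι → Bool, biased γ x * (-1:ℝ)^(hw x) = (1 - 2*γ)^(Fintype.card ι) := by
  have h1 : ∀ x : ι → Bool, biased γ x * (-1:ℝ)^(hw x)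
      = ∏ i, (if x i then -γ else 1 - γ) := by
    intro x
    rw [biased, neg_one_pow_hw, ← Finset.prod_mul_distrib]
    exact Finset.prod_congr rfl fun i _ => by cases h : x i <;> simp
  rw [Finset.sum_congr rfl fun x _ => h1 x,
    sum_prod_bool (fun _ b => if b then -γ else 1 - γ)]
  simp only [if_true, Bool.false_eq_true, if_false]
  rw [Finset.prod_const, Finset.card_univ]
  ring_nf

lemma neg_one_pow_mod_two (n : ℕ) : (-1:ℝ)^(n % 2) = (-1)^n := by
  conv_rhs => rw [← Nat.div_add_mod n 2]
  rw [pow_add, pow_mul]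
  norm_num

lemma my_abs_neg_one_pow (k : ℕ) : |(-1:ℝ)^k| = 1 := by
  rw [abs_pow]; norm_num

lemma arith_final (u e a b k S : ℝ) (hu0 : 0 < u) (hu2 : u ≤ 1/2) (heu : e = u^5)
    (ea : |a - 1/2| ≤ 2*e) (eb : |b - u| ≤ 2*e) (ek : |k - 2*u| ≤ 2*e)
    (hC : |a * b - k| ≤ 2 * (1 - S)) : S ≤ 1 - u^3 := by
  obtain ⟨ea1, ea2⟩ := abs_le.mp ea
  obtain ⟨eb1, eb2⟩ := abs_le.mp eb
  obtain ⟨ek1, ek2⟩ := abs_le.mp ek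
  obtain ⟨hC1, hC2⟩ := abs_le.mp hC
  have h2 : u^2 ≤ 1/4 := by nlinarith
  have h4 : u^4 ≤ 1/16 := by nlinarith
  have h5 : u^5 ≤ 1/32 := by nlinarith
  have h9 : u^9 ≤ 1/512 := by
    calc u^9 ≤ (1/2:ℝ)^9 := pow_le_pow_left₀ hu0.le hu2 9
      _ = 1/512 := by norm_num
  have he0 : 0 ≤ e := by rw [heu]; positivity
  have hele : e ≤ u/16 := by
    rw [heu]
    calc u^5 = u * u^4 := by ring
      _ ≤ u * (1/16) := by nlinarith
      _ = u/16 := by ring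
  have hbpos : 0 ≤ b := by linarith
  have hab : a * b ≤ (1/2 + 2*e) * (u + 2*e) := by
    apply mul_le_mul (by linarith) (by linarith) hbpos (by linarith)
  have hfacpos : 0 ≤ u * (3/2 - 2*u^2 - 3*u^4 - 2*u^5 - 4*u^9) := by
    apply mul_nonneg hu0.le
    linarith
  have hfac0 : (2*u - 2*e) - (1/2 + 2*e) * (u + 2*e) - 2*u^3
      = u * (3/2 - 2*u^2 - 3*u^4 - 2*u^5 - 4*u^9) := by
    rw [heu]; ring
  linarith

theorem stmt9 (t : ℕ) (ht : 1 ≤ t)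
    (μ : (Bool × Bool × (Fin (t - 1) → Bool) × (Fin (t - 1) → Bool)) → ℝ)
    (hμ : IsDist μ)
    (hindA : ∀ (a b : Bool) (D : Fin (t - 1) → Bool),
      push (fun ω => (ω.1, ω.2.1, ω.2.2.2)) μ (a, b, D) =
        push (fun ω => ω.1) μ a * push (fun ω => (ω.2.1, ω.2.2.2)) μ (b, D))
    (hindB : ∀ (b a : Bool) (C : Fin (t - 1) → Bool),
      push (fun ω => (ω.2.1, ω.1, ω.2.2.1)) μ (b, a, C) =
        push (fun ω => ω.2.1) μ b * push (fun ω => (ω.1, ω.2.2.1)) μ (a, C))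
    (heq : push (fun ω => (ω.1, ω.2.2.1)) μ = push (fun ω => (ω.2.1, ω.2.2.2)) μ)
    (hclose : tv (push (fun ω => (ω.1, ω.2.2.1)) μ)
        (fun p => (if p.1 then (1 / 4 : ℝ) else 3 / 4) * biased (1 / 4) p.2) ≤
      (1 / 2 : ℝ) ^ (5 * t)) :
    (∑ ω, if (ω.1.toNat + hw ω.2.2.1) % 2 = (ω.2.1.toNat + hw ω.2.2.2) % 2
        then μ ω else 0) ≤
      1 - (1 / 2 : ℝ) ^ (3 * t) := by
  classical
  obtain ⟨n, rfl⟩ : ∃ n, t = n + 1 := ⟨t - 1, (Nat.succ_pred_eq_of_pos ht).symm⟩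
  set u : ℝ := (1/2)^(n+1) with hu_def
  set e : ℝ := (1/2:ℝ)^(5*(n+1)) with he_def
  set q : Bool × (Fin (n + 1 - 1) → Bool) → ℝ :=
    fun p => (if p.1 then (1 / 4 : ℝ) else 3 / 4) * biased (1 / 4) p.2 with hq_def
  set pAC := push (fun ω : Bool × Bool × (Fin (n + 1 - 1) → Bool) × (Fin (n + 1 - 1) → Bool)
      => (ω.1, ω.2.2.1)) μ with hpAC_def
  set α : ℝ := ∑ ω, μ ω * (-1:ℝ)^(ω.1.toNat) with hα_def
  set β : ℝ := ∑ ω, μ ω * (-1:ℝ)^(ω.2.1.toNat + hw ω.2.2.2) with hβ_def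
  set κ : ℝ := ∑ ω, μ ω * (-1:ℝ)^(hw ω.2.2.1) with hκ_def
  set S : ℝ := ∑ ω, if (ω.1.toNat + hw ω.2.2.1) % 2 = (ω.2.1.toNat + hw ω.2.2.2) % 2
      then μ ω else 0 with hS_def
  have hpos : ∀ ω, 0 ≤ μ ω := hμ.1
  have hcard : Fintype.card (Fin (n + 1 - 1)) = n := by simp
  have hn2u : (1/2:ℝ)^n = 2 * u := by
    rw [hu_def, pow_succ]; ring
  -- independence factorization
  have hA1 : ∑ a : Bool, push (fun ω => ω.1) μ a * (-1:ℝ)^(a.toNat) = α := by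
    rw [hα_def]; exact push_mul_sum _ μ _
  have hBD1 : ∑ r : Bool × (Fin (n + 1 - 1) → Bool),
      push (fun ω => (ω.2.1, ω.2.2.2)) μ r * (-1:ℝ)^(r.1.toNat + hw r.2) = β := by
    rw [hβ_def]; exact push_mul_sum _ μ _
  have hfact : ∑ ω, μ ω * ((-1:ℝ)^(ω.1.toNat) * (-1:ℝ)^(ω.2.1.toNat + hw ω.2.2.2))
      = α * β := by
    have h1 : ∑ ω, μ ω * ((-1:ℝ)^(ω.1.toNat) * (-1:ℝ)^(ω.2.1.toNat + hw ω.2.2.2))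
        = ∑ p : Bool × Bool × (Fin (n + 1 - 1) → Bool),
          push (fun ω => (ω.1, ω.2.1, ω.2.2.2)) μ p *
            ((-1:ℝ)^(p.1.toNat) * (-1:ℝ)^(p.2.1.toNat + hw p.2.2)) :=
      (push_mul_sum (fun ω => (ω.1, ω.2.1, ω.2.2.2)) μ
        (fun p => (-1:ℝ)^(p.1.toNat) * (-1:ℝ)^(p.2.1.toNat + hw p.2.2))).symm
    rw [h1, Fintype.sum_prod_type]
    rw [← hA1, ← hBD1, Finset.sum_mul_sum]
    refine Finset.sum_congr rfl fun a _ => Finset.sum_congr rfl fun r _ => ?_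
    obtain ⟨b, D⟩ := r
    rw [hindA a b D]
    ring
  have hI2 : ∑ ω, μ ω * ((-1:ℝ)^(ω.1.toNat) * (-1:ℝ)^(ω.1.toNat + hw ω.2.2.1)) = κ := by
    rw [hκ_def]
    refine Finset.sum_congr rfl fun ω _ => ?_
    congr 1
    rw [pow_add, ← mul_assoc, ← mul_pow]
    norm_num
  -- step C
  have hsplit : S + ∑ ω, (if (ω.1.toNat + hw ω.2.2.1) % 2 = (ω.2.1.toNat + hw ω.2.2.2) % 2
      then 0 else μ ω) = 1 := by
    rw [hS_def, ← Finset.sum_add_distrib, show (1:ℝ) = ∑ ω, μ ω from hμ.2.symm]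
    exact Finset.sum_congr rfl fun ω _ => by split_ifs <;> ring
  have hC : |α * β - κ| ≤ 2 * (1 - S) := by
    rw [← hfact, ← hI2, ← Finset.sum_sub_distrib]
    have h1 : 1 - S = ∑ ω, (if (ω.1.toNat + hw ω.2.2.1) % 2
        = (ω.2.1.toNat + hw ω.2.2.2) % 2 then 0 else μ ω) := by linarith
    rw [h1, Finset.mul_sum]
    refine le_trans (Finset.abs_sum_le_sum_abs _ _) (Finset.sum_le_sum fun ω _ => ?_)
    split_ifs with h
    · have hc : (-1:ℝ)^(ω.2.1.toNat + hw ω.2.2.2) = (-1:ℝ)^(ω.1.toNat + hw ω.2.2.1) := by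
        rw [← neg_one_pow_mod_two, ← h, neg_one_pow_mod_two]
      rw [hc]
      simp
    · have h3 : ∀ k m : ℕ, |μ ω * ((-1:ℝ)^k * (-1:ℝ)^m)| = μ ω := by
        intro k m
        rw [abs_mul, abs_mul, my_abs_neg_one_pow, my_abs_neg_one_pow,
          abs_of_nonneg (hpos ω)]
        ring
      calc |μ ω * ((-1:ℝ)^(ω.1.toNat) * (-1:ℝ)^(ω.2.1.toNat + hw ω.2.2.2))
            - μ ω * ((-1:ℝ)^(ω.1.toNat) * (-1:ℝ)^(ω.1.toNat + hw ω.2.2.1))|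
          ≤ |μ ω * ((-1:ℝ)^(ω.1.toNat) * (-1:ℝ)^(ω.2.1.toNat + hw ω.2.2.2))|
            + |μ ω * ((-1:ℝ)^(ω.1.toNat) * (-1:ℝ)^(ω.1.toNat + hw ω.2.2.1))| := by
            rw [sub_eq_add_neg]
            exact le_trans (abs_add_le _ _) (by rw [abs_neg])
        _ = 2 * μ ω := by rw [h3, h3]; ring
  -- tv estimates
  have htv : ∀ g : Bool × (Fin (n + 1 - 1) → Bool) → ℝ, (∀ p, |g p| ≤ 1) →
      |∑ p, pAC p * g p - ∑ p, q p * g p| ≤ 2 * e :=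
    fun g hg => le_trans (sum_mul_sub_le pAC q g hg) (by linarith [hclose])
  have habs1 : ∀ k : ℕ, |(-1:ℝ)^k| ≤ 1 := fun k => le_of_eq (my_abs_neg_one_pow k)
  have hinner : ∀ c s : ℝ, ∑ C : Fin (n + 1 - 1) → Bool, c * biased (1/4) C * s
      = c * s := by
    intro c s
    rw [← Finset.sum_mul, ← Finset.mul_sum, sum_biased]
    ring
  have hinner2 : ∀ c : ℝ, ∑ C : Fin (n + 1 - 1) → Bool,
      c * biased (1/4) C * (-1:ℝ)^(hw C) = c * (2 * u) := by
    intro c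
    have h0 : ∀ C : Fin (n + 1 - 1) → Bool, c * biased (1/4) C * (-1:ℝ)^(hw C)
        = c * (biased (1/4) C * (-1:ℝ)^(hw C)) := fun C => by ring
    rw [Finset.sum_congr rfl fun C _ => h0 C, ← Finset.mul_sum, sum_biased_sign, hcard]
    rw [show (1 - 2*(1/4:ℝ)) = 1/2 by norm_num, hn2u]
  have hinner3 : ∀ (c : ℝ) (b : Bool), ∑ C : Fin (n + 1 - 1) → Bool,
      c * biased (1/4) C * (-1:ℝ)^(b.toNat + hw C) = c * (-1:ℝ)^(b.toNat) * (2 * u) := by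
    intro c b
    have h0 : ∀ C : Fin (n + 1 - 1) → Bool, c * biased (1/4) C * (-1:ℝ)^(b.toNat + hw C)
        = (c * (-1:ℝ)^(b.toNat)) * (biased (1/4) C * (-1:ℝ)^(hw C)) := fun C => by
      rw [pow_add]; ring
    rw [Finset.sum_congr rfl fun C _ => h0 C, ← Finset.mul_sum, sum_biased_sign, hcard]
    rw [show (1 - 2*(1/4:ℝ)) = 1/2 by norm_num, hn2u]
  have hq1 : ∑ p : Bool × (Fin (n + 1 - 1) → Bool), q p * (-1:ℝ)^(p.1.toNat) = 1/2 := by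
    rw [Fintype.sum_prod_type, Fintype.sum_bool]
    simp only [hq_def, eq_self_iff_true, if_true, Bool.false_eq_true, if_false]
    rw [hinner, hinner]
    norm_num
  have hq2 : ∑ p : Bool × (Fin (n + 1 - 1) → Bool), q p * (-1:ℝ)^(hw p.2) = 2 * u := by
    rw [Fintype.sum_prod_type, Fintype.sum_bool]
    simp only [hq_def, eq_self_iff_true, if_true, Bool.false_eq_true, if_false]
    rw [hinner2, hinner2]
    ring
  have hq3 : ∑ p : Bool × (Fin (n + 1 - 1) → Bool), q p * (-1:ℝ)^(p.1.toNat + hw p.2)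
      = u := by
    rw [Fintype.sum_prod_type, Fintype.sum_bool]
    simp only [hq_def, eq_self_iff_true, if_true, Bool.false_eq_true, if_false]
    rw [hinner3, hinner3]
    norm_num
    ring
  -- push rewrites
  have hα2 : α = ∑ p, pAC p * (-1:ℝ)^(p.1.toNat) := by
    rw [hα_def]
    exact (push_mul_sum (fun ω => (ω.1, ω.2.2.1)) μ fun p => (-1:ℝ)^(p.1.toNat)).symm
  have hκ2 : κ = ∑ p, pAC p * (-1:ℝ)^(hw p.2) := by
    rw [hκ_def]
    exact (push_mul_sum (fun ω => (ω.1, ω.2.2.1)) μ fun p => (-1:ℝ)^(hw p.2)).symm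
  have hβ2 : β = ∑ p, pAC p * (-1:ℝ)^(p.1.toNat + hw p.2) := by
    rw [hβ_def, heq]
    exact (push_mul_sum (fun ω => (ω.2.1, ω.2.2.2)) μ
      fun p => (-1:ℝ)^(p.1.toNat + hw p.2)).symm
  have eα : |α - 1/2| ≤ 2 * e := by
    rw [hα2, ← hq1]; exact htv _ fun p => habs1 _
  have eκ : |κ - 2 * u| ≤ 2 * e := by
    rw [hκ2, ← hq2]; exact htv _ fun p => habs1 _
  have eβ : |β - u| ≤ 2 * e := by
    rw [hβ2, ← hq3]; exact htv _ fun p => habs1 _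
  -- numerics
  have heu : e = u^5 := by
    rw [he_def, hu_def, ← pow_mul]
    congr 1
    ring
  have hu0 : 0 < u := by rw [hu_def]; positivity
  have hu2 : u ≤ 1/2 := by
    rw [hu_def]
    calc (1/2:ℝ)^(n+1) ≤ (1/2:ℝ)^1 :=
          pow_le_pow_of_le_one (by norm_num) (by norm_num) (by omega)
      _ = 1/2 := pow_one _
  have hgoal : (1/2:ℝ)^(3*(n+1)) = u^3 := by
    rw [hu_def, ← pow_mul]
    congr 1
    ring
  rw [hgoal]
  exact arith_final u e α β κ S hu0 hu2 heu eα eβ eκ hC
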